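/- arXiv:1602.05123 — 4 statements merged into one kernel-verified Lean document; each statement's English description precedes it below -/
import Mathlib

section
/- Let H be a self-adjoint operator, P an orthogonal projection commuting-compatible with the form domain of H, Q = I − P, and V a bounded self-adjoint operator with 0 ≤ V ≤ M. Then for any δ ∈ (0,1), as quadratic forms, H₀ + V ≥ P(H₀ + (1−δ)V)P + Q(H₀ + (1−δ⁻¹)V)Q, provided P and Q commute with H₀ (i.e., P H₀ Q = 0). -/
/-!
Split `f = p + q` with `p = P f`, `q = (1 - P) f`. Because `H₀` is self-adjoint and
`P H₀ (1 - P) = 0`, the form of `H₀` has no cross terms: `H₀[f] = H₀[p] + H₀[q]`. The form of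
`V` has the cross term `2 Re⟪V p, q⟫`, and expanding `0 ≤ V[δ p + q]` bounds it below by
`-δ V[p] - δ⁻¹ V[q]`, which is exactly the loss on the right-hand side.
-/

noncomputable def qform {H : Type*} [NormedAddCommGroup H] [InnerProductSpace ℂ H]
    (A : H →L[ℂ] H) (f : H) : ℝ :=
  Complex.re (@inner ℂ H _ (A f) f)

open scoped InnerProductSpace

namespace qform

variable {H : Type*} [NormedAddCommGroup H] [InnerProductSpace ℂ H]

lemma add_left (A B : H →L[ℂ] H) (f : H) : qform (A + B) f = qform A f + qform B f := by
  simp only [qform, add_apply, inner_add_left, Complex.add_re]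

lemma ofReal_smul_left (c : ℝ) (A : H →L[ℂ] H) (f : H) :
    qform ((c : ℂ) • A) f = c * qform A f := by
  simp only [qform, smul_apply, inner_smul_left, Complex.conj_ofReal,
    Complex.re_ofReal_mul]

lemma ofReal_smul_right (c : ℝ) (A : H →L[ℂ] H) (f : H) :
    qform A ((c : ℂ) • f) = c ^ 2 * qform A f := by
  simp only [qform, map_smul, inner_smul_left, inner_smul_right, Complex.conj_ofReal,
    ← mul_assoc, ← Complex.ofReal_mul, Complex.re_ofReal_mul, sq]

variable [CompleteSpace H]

lemma re_inner_map_comm {A : H →L[ℂ] H} (hA : IsSelfAdjoint A) (x y : H) :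
    (⟪A x, y⟫_ℂ).re = (⟪A y, x⟫_ℂ).re := by
  have hsymm : ⟪A x, y⟫_ℂ = ⟪x, A y⟫_ℂ := hA.isSymmetric x y
  rw [hsymm, ← inner_conj_symm, Complex.conj_re]

lemma add_right {A : H →L[ℂ] H} (hA : IsSelfAdjoint A) (x y : H) :
    qform A (x + y) = qform A x + 2 * (⟪A x, y⟫_ℂ).re + qform A y := by
  have hsymm := re_inner_map_comm hA y x
  simp only [qform, map_add, inner_add_left, inner_add_right, Complex.add_re, hsymm]
  ring

lemma comp_comp_self {P : H →L[ℂ] H} (hP : IsSelfAdjoint P) (A : H →L[ℂ] H) (f : H) :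
    qform (P ∘L A ∘L P) f = qform A (P f) := by
  have hsymm : ⟪P (A (P f)), f⟫_ℂ = ⟪A (P f), P f⟫_ℂ := hP.isSymmetric _ f
  simp only [qform, ContinuousLinearMap.comp_apply, hsymm]

lemma neg_two_mul_re_inner_le {V : H →L[ℂ] H} (hV : IsSelfAdjoint V)
    (hV0 : ∀ f, 0 ≤ qform V f) {δ : ℝ} (hδ : 0 < δ) (x y : H) :
    -(2 * (⟪V x, y⟫_ℂ).re) ≤ δ * qform V x + δ⁻¹ * qform V y := by
  have h := hV0 ((δ : ℂ) • x + y)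
  rw [add_right hV, ofReal_smul_right, map_smul, inner_smul_left, Complex.conj_ofReal,
    Complex.re_ofReal_mul] at h
  have key : 0 ≤ δ * (δ * qform V x + 2 * (⟪V x, y⟫_ℂ).re + δ⁻¹ * qform V y) := by
    rw [mul_add, mul_add, ← mul_assoc δ δ⁻¹, mul_inv_cancel₀ hδ.ne']
    linarith
  linarith [nonneg_of_mul_nonneg_right key hδ]

lemma eq_add_of_comp_comp_one_sub_eq_zero {A P : H →L[ℂ] H} (hA : IsSelfAdjoint A)
    (hP : IsSelfAdjoint P) (hPQ : P ∘L (A ∘L (1 - P)) = 0) (f : H) :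
    qform A f = qform A (P f) + qform A ((1 - P) f) := by
  have hPAQ : P (A ((1 - P) f)) = 0 := DFunLike.congr_fun hPQ f
  have hPAQ_inner : ⟪P (A ((1 - P) f)), f⟫_ℂ = ⟪A ((1 - P) f), P f⟫_ℂ := hP.isSymmetric _ f
  have hcross_zero : (⟪A (P f), (1 - P) f⟫_ℂ).re = 0 := by
    rw [re_inner_map_comm hA, ← hPAQ_inner, hPAQ, inner_zero_left, Complex.zero_re]
  have hf : P f + (1 - P) f = f := by simp
  have hsplit := add_right hA (P f) ((1 - P) f)
  rw [hf, hcross_zero] at hsplit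
  linarith

end qform

theorem stmt4_general {H : Type*} [NormedAddCommGroup H] [InnerProductSpace ℂ H] [CompleteSpace H]
    (H₀ V P : H →L[ℂ] H) (δ : ℝ)
    (hH₀ : IsSelfAdjoint H₀) (hP : IsSelfAdjoint P)
    (hPQ : P ∘L (H₀ ∘L (1 - P)) = 0)
    (hV : IsSelfAdjoint V)
    (hV0 : ∀ f, 0 ≤ qform V f)
    (hδ : δ ∈ Set.Ioo (0 : ℝ) 1) :
    ∀ f : H,
      qform (P ∘L (H₀ + ((1 - δ : ℝ) : ℂ) • V) ∘L P
        + (1 - P) ∘L (H₀ + ((1 - δ⁻¹ : ℝ) : ℂ) • V) ∘L (1 - P)) f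
      ≤ qform (H₀ + V) f := by
  intro f
  have hQ : IsSelfAdjoint (1 - P) := (IsSelfAdjoint.one (R := H →L[ℂ] H)).sub hP
  have hf : P f + (1 - P) f = f := by simp
  have hVf := qform.add_right hV (P f) ((1 - P) f)
  rw [hf] at hVf
  have hweighted := qform.neg_two_mul_re_inner_le hV hV0 hδ.1 (P f) ((1 - P) f)
  rw [qform.add_left, qform.comp_comp_self hP, qform.comp_comp_self hQ, qform.add_left,
    qform.add_left, qform.add_left, qform.ofReal_smul_left, qform.ofReal_smul_left,
    qform.eq_add_of_comp_comp_one_sub_eq_zero hH₀ hP hPQ f, hVf]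
  linarith

/-- Let `H₀` be self-adjoint with `P H₀ Q = 0` for an orthogonal projection `P`
(`Q = I − P`), and let `V` be a bounded self-adjoint operator with `0 ≤ V ≤ M`.
Then for any `δ ∈ (0,1)`, as quadratic forms,
`H₀ + V ≥ P(H₀ + (1−δ)V)P + Q(H₀ + (1−δ⁻¹)V)Q`. -/
theorem stmt4 {H : Type*} [NormedAddCommGroup H] [InnerProductSpace ℂ H] [CompleteSpace H]
    (H₀ V P : H →L[ℂ] H) (M δ : ℝ)
    (hH₀ : IsSelfAdjoint H₀) (hP : IsSelfAdjoint P) (hPproj : P ∘L P = P)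
    (hPQ : P ∘L (H₀ ∘L (1 - P)) = 0)
    (hV : IsSelfAdjoint V)
    (hV0 : ∀ f, 0 ≤ qform V f)
    (hVM : ∀ f, qform V f ≤ M * ‖f‖ ^ 2)
    (hδ : δ ∈ Set.Ioo (0 : ℝ) 1) :
    ∀ f : H,
      qform (P ∘L (H₀ + ((1 - δ : ℝ) : ℂ) • V) ∘L P
        + (1 - P) ∘L (H₀ + ((1 - δ⁻¹ : ℝ) : ℂ) • V) ∘L (1 - P)) f
      ≤ qform (H₀ + V) f :=
  stmt4_general H₀ V P δ hH₀ hP hPQ hV hV0 hδ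
end

section
/- Suppose ν(E) = Σ_{j: E_j < E} N₀(E − E_j) where N₀(E) = c·E_+^{d/2}(1 + o(1)) as E → ∞ with c = ω_d/(2π)^d, and the eigenvalue counting function ρ(E) = #{j : E_j < E} satisfies ρ(E) = C E^θ (1 + o(1)) as E → ∞ for some C, θ > 0. Then ν(E) = C · (dθ/(d + 2θ)) · B(d/2, θ) · (ω_d/(2π)^d) · E^{d/2 + θ} (1 + o(1)) as E → ∞, where B is the Euler beta function. -/
open Filter Real

/-- The semiclassical coefficient `ω_d/(2π)^d`, with `ω_d = π^{d/2}/Γ(d/2+1)` the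
volume of the unit ball in `ℝ^d`. -/
noncomputable def semiclassCoeff (d : ℕ) : ℝ :=
  π ^ ((d : ℝ) / 2) / Real.Gamma ((d : ℝ) / 2 + 1) / (2 * π) ^ (d : ℕ)

/-!
Fix a lower bound `b` of the `E_j` and points `t_k = b + x_k (E - b)`, where `x_k^θ = k/m`.
Grouping the `E_j < E` into the buckets `t_k ≤ E_j < t_{k+1}` and using that `N₀` is monotone,
`ν(E)` lies between `Σ_k (ρ(t_{k+1}) - ρ(t_k)) N₀(E - t_{k+1})` and the same sum with
`N₀(E - t_k)`. After division by `E^{d/2+θ}` these tend to `C c` times the lower and upper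
Riemann–Stieltjes sums of `∫₀¹ (1 - x)^{d/2} d(x^θ) = θ B(θ, d/2 + 1) = (dθ/(d+2θ)) B(d/2, θ)`,
and since every step of `x^θ` is `1/m`, the two sums differ by exactly `1/m`.
-/

open MeasureTheory Finset Topology

lemma tendsto_of_squeeze_family {α ι β : Type*} [LinearOrder β] [TopologicalSpace β]
    [OrderTopology β] {l : Filter α} {p : Filter ι} [p.NeBot] {f : α → β}
    {L U : ι → α → β} {lo up : ι → β} {K : β}
    (hLU : ∀ᶠ i in p, ∀ᶠ x in l, L i x ≤ f x ∧ f x ≤ U i x)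
    (hL : ∀ i, Tendsto (L i) l (𝓝 (lo i))) (hU : ∀ i, Tendsto (U i) l (𝓝 (up i)))
    (hlo : Tendsto lo p (𝓝 K)) (hup : Tendsto up p (𝓝 K)) : Tendsto f l (𝓝 K) := by
  refine tendsto_order.2 ⟨fun a ha => ?_, fun a ha => ?_⟩
  · obtain ⟨i, hai, hi⟩ := ((hlo.eventually (lt_mem_nhds ha)).and hLU).exists
    filter_upwards [(hL i).eventually (lt_mem_nhds hai), hi] with x h1 h2 using h1.trans_le h2.1
  · obtain ⟨i, hai, hi⟩ := ((hup.eventually (gt_mem_nhds ha)).and hLU).exists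
    filter_upwards [(hU i).eventually (gt_mem_nhds hai), hi] with x h1 h2 using h2.2.trans_lt h1

lemma tendsto_comp_mul_add_div_rpow {F : ℝ → ℝ} {c r : ℝ} (hr : 0 < r)
    (hF : Tendsto (fun t => F t / t ^ r) atTop (𝓝 c)) {a : ℝ} (ha : 0 ≤ a) (b : ℝ) :
    Tendsto (fun E => F (a * E + b) / E ^ r) atTop (𝓝 (c * a ^ r)) := by
  rcases ha.eq_or_lt with rfl | ha
  · simpa [Real.zero_rpow hr.ne'] using tendsto_const_nhds.div_atTop (tendsto_rpow_atTop hr)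
  have hlin : Tendsto (fun E => a * E + b) atTop atTop :=
    tendsto_atTop_add_const_right _ b (tendsto_id.const_mul_atTop ha)
  have hratio : Tendsto (fun E => ((a * E + b) / E) ^ r) atTop (𝓝 (a ^ r)) := by
    have : Tendsto (fun E : ℝ => a + b * E⁻¹) atTop (𝓝 (a + b * 0)) :=
      tendsto_inv_atTop_zero.const_mul b |>.const_add a
    rw [mul_zero, add_zero] at this
    refine (this.rpow_const (Or.inl ha.ne')).congr' ?_
    filter_upwards [eventually_ne_atTop 0] with E hE
    field_simp
  refine ((hF.comp hlin).mul hratio).congr' ?_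
  filter_upwards [eventually_gt_atTop 0, hlin.eventually_gt_atTop 0] with E hE hE'
  rw [Function.comp_apply, Real.div_rpow hE'.le hE.le]
  have : (a * E + b) ^ r ≠ 0 := by positivity
  field_simp

section Counting

variable {ι : Type*} (s : Finset ι) (x : ι → ℝ) {φ : ℝ → ℝ}

lemma sum_filter_lt_sub_mem_Icc (hφ : Antitone φ) {t t' : ℝ} (htt' : t ≤ t') :
    ∑ i ∈ s.filter (x · < t'), φ (x i) - ∑ i ∈ s.filter (x · < t), φ (x i) ∈
      Set.Icc (((#(s.filter (x · < t')) : ℝ) - #(s.filter (x · < t))) * φ t')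
        (((#(s.filter (x · < t')) : ℝ) - #(s.filter (x · < t))) * φ t) := by
  set u := s.filter (x · < t')
  have hu : s.filter (x · < t) = u.filter (x · < t) := by
    rw [filter_filter]
    exact filter_congr fun i _ => ⟨fun h => ⟨h.trans_le htt', h⟩, And.right⟩
  have hsum := sum_filter_add_sum_filter_not u (x · < t) (fun i => φ (x i))
  have hcard := card_filter_add_card_filter_not (s := u) (x · < t)
  rw [hu, ← hsum, ← hcard, Nat.cast_add, add_sub_cancel_left, add_sub_cancel_left]
  constructor
  · rw [← nsmul_eq_mul]
    refine card_nsmul_le_sum _ _ _ fun i hi => hφ ?_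
    simp only [u, mem_filter] at hi
    exact hi.1.2.le
  · rw [← nsmul_eq_mul]
    refine sum_le_card_nsmul _ _ _ fun i hi => hφ ?_
    simp only [u, mem_filter, not_lt] at hi
    exact hi.2

lemma sum_filter_lt_sub_mem_Icc_partition (hφ : Antitone φ) {t : ℕ → ℝ} (ht : Monotone t) (m : ℕ) :
    ∑ i ∈ s.filter (x · < t m), φ (x i) - ∑ i ∈ s.filter (x · < t 0), φ (x i) ∈
      Set.Icc
        (∑ k ∈ range m, ((#(s.filter (x · < t (k + 1))) : ℝ) - #(s.filter (x · < t k))) *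
          φ (t (k + 1)))
        (∑ k ∈ range m, ((#(s.filter (x · < t (k + 1))) : ℝ) - #(s.filter (x · < t k))) *
          φ (t k)) := by
  rw [← sum_range_sub (fun k => ∑ i ∈ s.filter (x · < t k), φ (x i))]
  have hstep k := sum_filter_lt_sub_mem_Icc s x hφ (ht (Nat.le_succ k))
  exact ⟨sum_le_sum fun k _ => (hstep k).1, sum_le_sum fun k _ => (hstep k).2⟩

end Counting

noncomputable def countingFunction (Es : ℕ → ℝ) (E : ℝ) : ℝ := ({j | Es j < E}.ncard : ℝ)

lemma countingFunction_eq_card_filter {Es : ℕ → ℝ} {J : ℕ} {T t : ℝ}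
    (hJ : ∀ j ≥ J, T ≤ Es j) (ht : t ≤ T) :
    countingFunction Es t = #((range J).filter (Es · < t)) := by
  rw [countingFunction, ← Set.ncard_coe_finset]
  congr 2
  ext j
  simp only [Set.mem_ofPred_eq, coe_filter, mem_range]
  exact ⟨fun h => ⟨not_le.1 fun hj => (hJ j hj).not_gt (h.trans_le ht), h⟩, And.right⟩

lemma tsum_mem_Icc_partition {Es : ℕ → ℝ} (hEs : Tendsto Es atTop atTop) {N₀ : ℝ → ℝ}
    (hmono : Monotone N₀) (hzero : ∀ E ≤ (0 : ℝ), N₀ E = 0) {t : ℕ → ℝ} (ht : Monotone t)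
    (ht0 : ∀ j, t 0 ≤ Es j) {m : ℕ} {E : ℝ} (htm : t m = E) :
    ∑' j, N₀ (E - Es j) ∈ Set.Icc
      (∑ k ∈ range m, (countingFunction Es (t (k + 1)) - countingFunction Es (t k)) *
        N₀ (E - t (k + 1)))
      (∑ k ∈ range m, (countingFunction Es (t (k + 1)) - countingFunction Es (t k)) *
        N₀ (E - t k)) := by
  subst htm
  obtain ⟨J, hJ⟩ := eventually_atTop.1 (hEs.eventually_ge_atTop (t m))
  have hcount : ∀ k ≤ m, countingFunction Es (t k) = #((range J).filter (Es · < t k)) :=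
    fun k hk => countingFunction_eq_card_filter hJ (ht hk)
  have htsum : ∑' j, N₀ (t m - Es j) = ∑ j ∈ (range J).filter (Es · < t m), N₀ (t m - Es j) := by
    rw [sum_filter_of_ne fun j _ h => not_le.1 fun hj => h (hzero _ (sub_nonpos.2 hj))]
    exact tsum_eq_sum fun j hj => hzero _ (sub_nonpos.2 (hJ j (by simpa using hj)))
  have hempty : (range J).filter (Es · < t 0) = ∅ :=
    filter_false_of_mem fun j _ => not_lt.2 (ht0 j)
  have h := sum_filter_lt_sub_mem_Icc_partition (range J) Es
    (fun _ _ h => hmono (sub_le_sub_left h _)) ht m (φ := fun u => N₀ (t m - u))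
  rw [hempty, sum_empty, sub_zero, ← htsum] at h
  convert h using 2 <;> refine sum_congr rfl fun k hk => ?_ <;>
    rw [hcount k (mem_range.1 hk).le, hcount (k + 1) (mem_range.1 hk)]

lemma tendsto_sum_partition_div_rpow {ρ N : ℝ → ℝ} {C c θ p : ℝ} (hθ : 0 < θ) (hp : 0 < p)
    (hρ : Tendsto (fun t => ρ t / t ^ θ) atTop (𝓝 C))
    (hN : Tendsto (fun t => N t / t ^ p) atTop (𝓝 c)) (b : ℝ) {x y : ℕ → ℝ} {m : ℕ}
    (hx : ∀ k, 0 ≤ x k) (hy : ∀ k < m, y k ≤ 1) :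
    Tendsto (fun E => (∑ k ∈ range m, (ρ (b + x (k + 1) * (E - b)) - ρ (b + x k * (E - b))) *
        N (E - (b + y k * (E - b)))) / E ^ (p + θ)) atTop
      (𝓝 (C * c * ∑ k ∈ range m, (x (k + 1) ^ θ - x k ^ θ) * (1 - y k) ^ p)) := by
  have hρx k : Tendsto (fun E => ρ (b + x k * (E - b)) / E ^ θ) atTop (𝓝 (C * x k ^ θ)) :=
    (tendsto_comp_mul_add_div_rpow hθ hρ (hx k) ((1 - x k) * b)).congr fun E => by ring_nf
  have hNy k (hk : k < m) :
      Tendsto (fun E => N (E - (b + y k * (E - b))) / E ^ p) atTop (𝓝 (c * (1 - y k) ^ p)) :=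
    (tendsto_comp_mul_add_div_rpow hp hN (sub_nonneg.2 (hy k hk)) (-(1 - y k) * b)).congr
      fun E => by ring_nf
  have hsum := tendsto_finsetSum (range m) fun k hk =>
    ((hρx (k + 1)).sub (hρx k)).mul (hNy k (mem_range.1 hk))
  rw [mul_sum]
  convert hsum.congr' ?_ using 2
  · exact sum_congr rfl fun k _ => by ring
  filter_upwards [eventually_gt_atTop 0] with E hE
  rw [rpow_add hE, sum_div]
  refine sum_congr rfl fun k _ => ?_
  field_simp

lemma integral_mul_antitoneOn_mem_Icc {w φ : ℝ → ℝ} {a b : ℝ} (hab : a ≤ b)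
    (hw : IntervalIntegrable w volume a b) (hw0 : ∀ u ∈ Set.Icc a b, 0 ≤ w u)
    (hφ : AntitoneOn φ (Set.Icc a b)) (hwφ : IntervalIntegrable (fun u => w u * φ u) volume a b) :
    ∫ u in a..b, w u * φ u ∈ Set.Icc ((∫ u in a..b, w u) * φ b) ((∫ u in a..b, w u) * φ a) := by
  rw [← intervalIntegral.integral_mul_const, ← intervalIntegral.integral_mul_const]
  exact ⟨intervalIntegral.integral_mono_on hab (hw.mul_const _) hwφ fun u hu =>
      mul_le_mul_of_nonneg_left (hφ hu ⟨hab, le_rfl⟩ hu.2) (hw0 u hu),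
    intervalIntegral.integral_mono_on hab hwφ (hw.mul_const _) fun u hu =>
      mul_le_mul_of_nonneg_left (hφ ⟨le_rfl, hab⟩ hu hu.1) (hw0 u hu)⟩

lemma integral_mem_Icc_partition {θ p : ℝ} (hθ : 0 < θ) (hp : 0 < p) {x : ℕ → ℝ} {m : ℕ}
    (hx : Monotone x) (hx0 : x 0 = 0) (hxm : x m = 1) :
    ∫ u in (0 : ℝ)..1, θ * u ^ (θ - 1) * (1 - u) ^ p ∈ Set.Icc
      (∑ k ∈ range m, (x (k + 1) ^ θ - x k ^ θ) * (1 - x (k + 1)) ^ p)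
      (∑ k ∈ range m, (x (k + 1) ^ θ - x k ^ θ) * (1 - x k) ^ p) := by
  have hw a b : IntervalIntegrable (fun u : ℝ => θ * u ^ (θ - 1)) volume a b :=
    (intervalIntegral.intervalIntegrable_rpow' (by linarith)).const_mul θ
  have hB : Continuous fun u : ℝ => (1 - u) ^ p :=
    (continuous_const.sub continuous_id).rpow_const fun _ => Or.inr hp.le
  have hint a b : IntervalIntegrable (fun u : ℝ => θ * u ^ (θ - 1) * (1 - u) ^ p) volume a b :=
    (hw a b).mul_continuousOn hB.continuousOn
  have hpiece k (hk : k < m) : ∫ u in x k..x (k + 1), θ * u ^ (θ - 1) * (1 - u) ^ p ∈ Set.Icc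
      ((x (k + 1) ^ θ - x k ^ θ) * (1 - x (k + 1)) ^ p)
      ((x (k + 1) ^ θ - x k ^ θ) * (1 - x k) ^ p) := by
    have h0 : 0 ≤ x k := hx0 ▸ hx (Nat.zero_le k)
    have h1 : x (k + 1) ≤ 1 := hxm ▸ hx hk
    have hmass : ∫ u in x k..x (k + 1), θ * u ^ (θ - 1) = x (k + 1) ^ θ - x k ^ θ := by
      rw [intervalIntegral.integral_const_mul, integral_rpow (Or.inl (by linarith)),
        sub_add_cancel]
      field_simp
    rw [← hmass]
    refine integral_mul_antitoneOn_mem_Icc (hx k.le_succ) (hw _ _)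
      (fun u hu => ?_) (fun u hu v hv huv => ?_) (hint _ _)
    · have := h0.trans hu.1
      positivity
    · exact rpow_le_rpow (by linarith [hv.2]) (by linarith) hp.le
  have hsplit := intervalIntegral.sum_integral_adjacent_intervals (a := x) (n := m)
    fun k _ => hint _ _
  rw [hx0, hxm] at hsplit
  rw [← hsplit]
  exact ⟨sum_le_sum fun k hk => (hpiece k (mem_range.1 hk)).1,
    sum_le_sum fun k hk => (hpiece k (mem_range.1 hk)).2⟩

noncomputable def powPartition (θ : ℝ) (m k : ℕ) : ℝ := ((k : ℝ) / m) ^ θ⁻¹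

section powPartition

variable {θ : ℝ} {m : ℕ}

lemma powPartition_nonneg (k : ℕ) : 0 ≤ powPartition θ m k := by
  unfold powPartition
  positivity

lemma powPartition_monotone (hθ : 0 < θ) : Monotone (powPartition θ m) := fun k l hkl =>
  rpow_le_rpow (by positivity) (by gcongr) (inv_nonneg.2 hθ.le)

lemma powPartition_zero (hθ : θ ≠ 0) : powPartition θ m 0 = 0 := by
  simp [powPartition, hθ]

lemma powPartition_self (hm : m ≠ 0) : powPartition θ m m = 1 := by
  simp [powPartition, hm]

lemma powPartition_le_one (hθ : 0 < θ) {k : ℕ} (hk : k ≤ m) : powPartition θ m k ≤ 1 :=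
  rpow_le_one (by positivity) (div_le_one_of_le₀ (Nat.cast_le.2 hk) m.cast_nonneg)
    (inv_nonneg.2 hθ.le)

lemma powPartition_rpow (hθ : θ ≠ 0) (k : ℕ) : powPartition θ m k ^ θ = k / m :=
  rpow_inv_rpow (by positivity) hθ

end powPartition

lemma tendsto_sum_powPartition {θ p : ℝ} (hθ : 0 < θ) (hp : 0 < p) :
    Tendsto (fun m => ∑ k ∈ range m, (powPartition θ m (k + 1) ^ θ - powPartition θ m k ^ θ) *
        (1 - powPartition θ m (k + 1)) ^ p) atTop
      (𝓝 (∫ u in (0 : ℝ)..1, θ * u ^ (θ - 1) * (1 - u) ^ p)) ∧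
    Tendsto (fun m => ∑ k ∈ range m, (powPartition θ m (k + 1) ^ θ - powPartition θ m k ^ θ) *
        (1 - powPartition θ m k) ^ p) atTop
      (𝓝 (∫ u in (0 : ℝ)..1, θ * u ^ (θ - 1) * (1 - u) ^ p)) := by
  set I := ∫ u in (0 : ℝ)..1, θ * u ^ (θ - 1) * (1 - u) ^ p
  have hgap m (hm : m ≠ 0) :
      ∑ k ∈ range m, (powPartition θ m (k + 1) ^ θ - powPartition θ m k ^ θ) *
          (1 - powPartition θ m k) ^ p -
        ∑ k ∈ range m, (powPartition θ m (k + 1) ^ θ - powPartition θ m k ^ θ) *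
          (1 - powPartition θ m (k + 1)) ^ p = (m : ℝ)⁻¹ := by
    have hstep k : powPartition θ m (k + 1) ^ θ - powPartition θ m k ^ θ = (m : ℝ)⁻¹ := by
      rw [powPartition_rpow hθ.ne', powPartition_rpow hθ.ne']
      push_cast
      ring
    simp_rw [← sum_sub_distrib, hstep, ← mul_sub, ← mul_sum]
    rw [sum_range_sub' (fun k => (1 - powPartition θ m k) ^ p), powPartition_zero hθ.ne',
      powPartition_self hm]
    simp [hp.ne']
  have hbracket m (hm : m ≠ 0) := integral_mem_Icc_partition hθ hp (powPartition_monotone hθ)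
    (powPartition_zero hθ.ne') (powPartition_self (θ := θ) hm)
  have hinv : Tendsto (fun m : ℕ => (m : ℝ)⁻¹) atTop (𝓝 0) :=
    tendsto_inv_atTop_zero.comp tendsto_natCast_atTop_atTop
  constructor
  · refine tendsto_of_tendsto_of_tendsto_of_le_of_le' (by simpa using hinv.const_sub I)
      tendsto_const_nhds ?_ ?_ <;> filter_upwards [eventually_ne_atTop 0] with m hm
    · linarith [hgap m hm, (hbracket m hm).2]
    · exact (hbracket m hm).1
  · refine tendsto_of_tendsto_of_tendsto_of_le_of_le' tendsto_const_nhds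
      (by simpa using hinv.const_add I) ?_ ?_ <;> filter_upwards [eventually_ne_atTop 0] with m hm
    · exact (hbracket m hm).2
    · linarith [hgap m hm, (hbracket m hm).1]

lemma integral_rpow_mul_one_sub_rpow_eq_beta {a b : ℝ} (ha : 0 < a) (hb : 0 < b) :
    ∫ u in (0 : ℝ)..1, u ^ (a - 1) * (1 - u) ^ (b - 1) = ProbabilityTheory.beta a b := by
  have hcpx : Complex.betaIntegral a b =
      ((∫ u in (0 : ℝ)..1, u ^ (a - 1) * (1 - u) ^ (b - 1) : ℝ) : ℂ) := by
    rw [Complex.betaIntegral, ← intervalIntegral.integral_ofReal]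
    refine intervalIntegral.integral_congr fun u hu => ?_
    rw [Set.uIcc_of_le zero_le_one] at hu
    push_cast
    rw [Complex.ofReal_cpow hu.1, Complex.ofReal_cpow (sub_nonneg.2 hu.2)]
    push_cast
    rfl
  rw [ProbabilityTheory.beta_eq_betaIntegralReal a b ha hb, hcpx, Complex.ofReal_re]

lemma integral_mul_rpow_mul_one_sub_rpow_eq_mul_beta {θ p : ℝ} (hθ : 0 < θ) (hp : 0 < p) :
    ∫ u in (0 : ℝ)..1, θ * u ^ (θ - 1) * (1 - u) ^ p =
      p * θ / (p + θ) * ProbabilityTheory.beta p θ := by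
  have h := integral_rpow_mul_one_sub_rpow_eq_beta hθ (add_pos hp one_pos)
  rw [add_sub_cancel_right] at h
  simp_rw [mul_assoc]
  rw [intervalIntegral.integral_const_mul, h, ProbabilityTheory.beta, ProbabilityTheory.beta,
    show θ + (p + 1) = p + θ + 1 by ring, Gamma_add_one hp.ne',
    Gamma_add_one (add_pos hp hθ).ne']
  have := (Gamma_pos_of_pos (add_pos hp hθ)).ne'
  field_simp

theorem stmt12_general (d : ℕ) (hd : 1 ≤ d) (N₀ : ℝ → ℝ) (Es : ℕ → ℝ) (C θ : ℝ)
    (hθ : 0 < θ)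
    (hN₀mono : Monotone N₀) (hN₀zero : ∀ E ≤ (0 : ℝ), N₀ E = 0)
    (hN₀asym : Tendsto (fun E : ℝ => N₀ E / E ^ ((d : ℝ) / 2)) atTop
      (nhds (semiclassCoeff d)))
    (hEstop : Tendsto Es atTop atTop)
    (hρ : Tendsto (fun E : ℝ => ({j | Es j < E}.ncard : ℝ) / E ^ θ) atTop (nhds C)) :
    Tendsto (fun E : ℝ => (∑' j, N₀ (E - Es j)) / E ^ ((d : ℝ) / 2 + θ)) atTop
      (nhds (C * ((d * θ) / (d + 2 * θ))
        * (Real.Gamma ((d : ℝ) / 2) * Real.Gamma θ / Real.Gamma ((d : ℝ) / 2 + θ))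
        * semiclassCoeff d)) := by
  have hp : (0 : ℝ) < d / 2 := div_pos (Nat.cast_pos.2 hd) two_pos
  obtain ⟨b, hb⟩ := bddBelow_range_of_tendsto_atTop_atTop hEstop
  have hconst : C * ((d * θ) / (d + 2 * θ))
      * (Real.Gamma ((d : ℝ) / 2) * Real.Gamma θ / Real.Gamma ((d : ℝ) / 2 + θ))
      * semiclassCoeff d = C * semiclassCoeff d *
        ∫ u in (0 : ℝ)..1, θ * u ^ (θ - 1) * (1 - u) ^ ((d : ℝ) / 2) := by
    rw [integral_mul_rpow_mul_one_sub_rpow_eq_mul_beta hθ hp, ProbabilityTheory.beta]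
    field_simp
  rw [hconst]
  obtain ⟨hlower, hupper⟩ := tendsto_sum_powPartition hθ hp
  refine tendsto_of_squeeze_family ?_
    (fun m => tendsto_sum_partition_div_rpow (ρ := countingFunction Es) hθ hp hρ hN₀asym b
      powPartition_nonneg fun k hk => powPartition_le_one hθ hk)
    (fun m => tendsto_sum_partition_div_rpow (ρ := countingFunction Es) hθ hp hρ hN₀asym b
      powPartition_nonneg fun k hk => powPartition_le_one hθ hk.le)
    (hlower.const_mul _) (hupper.const_mul _)
  filter_upwards [eventually_ne_atTop 0] with m hm
  filter_upwards [eventually_gt_atTop (max b 0)] with E hE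
  have hbE : b ≤ E := (le_max_left b 0).trans hE.le
  have hbounds := tsum_mem_Icc_partition hEstop hN₀mono hN₀zero
    (t := fun k => b + powPartition θ m k * (E - b)) (m := m) (E := E)
    (fun k l hkl => add_le_add_right
      (mul_le_mul_of_nonneg_right (powPartition_monotone hθ hkl) (sub_nonneg.2 hbE)) b)
    (fun j => by simpa only [powPartition_zero hθ.ne', zero_mul, add_zero] using hb ⟨j, rfl⟩)
    (by rw [powPartition_self hm, one_mul, add_sub_cancel])
  have hEpos : 0 < E ^ ((d : ℝ) / 2 + θ) := rpow_pos_of_pos ((le_max_right b 0).trans_lt hE) _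
  exact ⟨div_le_div_of_nonneg_right hbounds.1 hEpos.le,
    div_le_div_of_nonneg_right hbounds.2 hEpos.le⟩

/-- If `ν(E) = Σ_j N₀(E − E_j)` where `N₀` is non-decreasing, vanishes on `(−∞,0]`
and satisfies `N₀(E) = (ω_d/(2π)^d) E^{d/2}(1+o(1))` as `E → ∞`, and the counting
function `ρ(E) = #{j : E_j < E}` of the non-decreasing sequence `E_j → ∞` satisfies
`ρ(E) = C E^θ (1+o(1))`, then
`ν(E) = C (dθ/(d+2θ)) B(d/2,θ) (ω_d/(2π)^d) E^{d/2+θ}(1+o(1))` as `E → ∞`,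
where `B(x,y) = Γ(x)Γ(y)/Γ(x+y)` is the Euler beta function. -/
theorem stmt12 (d : ℕ) (hd : 1 ≤ d) (N₀ : ℝ → ℝ) (Es : ℕ → ℝ) (C θ : ℝ)
    (hC : 0 < C) (hθ : 0 < θ)
    (hN₀mono : Monotone N₀) (hN₀zero : ∀ E ≤ (0 : ℝ), N₀ E = 0)
    (hN₀asym : Tendsto (fun E : ℝ => N₀ E / E ^ ((d : ℝ) / 2)) atTop
      (nhds (semiclassCoeff d)))
    (hEsmono : Monotone Es) (hEstop : Tendsto Es atTop atTop)
    (hρ : Tendsto (fun E : ℝ => ({j | Es j < E}.ncard : ℝ) / E ^ θ) atTop (nhds C)) :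
    Tendsto (fun E : ℝ => (∑' j, N₀ (E - Es j)) / E ^ ((d : ℝ) / 2 + θ)) atTop
      (nhds (C * ((d * θ) / (d + 2 * θ))
        * (Real.Gamma ((d : ℝ) / 2) * Real.Gamma θ / Real.Gamma ((d : ℝ) / 2 + θ))
        * semiclassCoeff d)) :=
  stmt12_general d hd N₀ Es C θ hθ hN₀mono hN₀zero hN₀asym hEstop hρ
end

section
/- Karamata Tauberian theorem (counting-measure version): let μ be a non-negative Borel measure on [0,∞) whose Laplace transform L(t) = ∫ e^{−tE} dμ(E) is finite for all t > 0 and satisfies L(t) = a t^{−γ}(1 + o(1)) as t ↓ 0 for some a > 0, γ > 0. Then μ([0,E)) = (a/Γ(γ+1)) E^γ (1 + o(1)) as E → ∞. -/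
/-
Karamata's argument. By the asymptotics of the Laplace transform, `t^γ ∫ e^{-ktE} dμ → a k^{-γ}`
as `t ↓ 0`, and `a k^{-γ} = (a/Γ(γ)) ∫₀^∞ e^{-ku} u^{γ-1} du`; by linearity,
`t^γ ∫ φ(e^{-tE}) dμ → (a/Γ(γ)) ∫₀^∞ φ(e^{-u}) u^{γ-1} du` for every `φ(x) = x q(x)` with `q` a
polynomial (the factor `x` keeps the left side finite). Now `μ[0, 1/t) = ∫ φ₁(e^{-tE}) dμ` for the
indicator `φ₁` of `(e^{-1}, 1]`, and by Weierstrass approximation `φ₁` is squeezed between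
polynomials `x q(x)` whose limit values are within `ε` of those of the indicators of
`(e^{-(1 ± δ)}, 1]`, namely `(a/Γ(γ)) (1 ± δ)^γ / γ`; these tend to `a/(γ Γ(γ)) = a/Γ(γ+1)`.
-/

open Filter MeasureTheory Set Real Polynomial Topology

namespace Karamata

/- `x * ramp b d x` rises linearly from `0` at `b` to `1` at `b + d`; dividing by `max x b` instead
of `x` keeps `ramp b d` continuous at `0`. -/
noncomputable def ramp (b d x : ℝ) : ℝ := max 0 (min 1 ((x - b) / d)) / max x b

lemma continuous_ramp {b : ℝ} (hb : 0 < b) (d : ℝ) : Continuous (ramp b d) :=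
  (continuous_const.max (continuous_const.min (by fun_prop))).div
    (continuous_id.max continuous_const) fun x => (hb.trans_le (le_max_right x b)).ne'

lemma indicator_le_mul_ramp_le_indicator {b d x : ℝ} (hb : 0 < b) (hd : 0 < d) :
    (Ioi (b + d)).indicator 1 x ≤ x * ramp b d x ∧ x * ramp b d x ≤ (Ioi b).indicator 1 x := by
  rcases le_or_gt x b with hxb | hbx
  · have : (x - b) / d ≤ 0 := div_nonpos_of_nonpos_of_nonneg (by linarith) hd.le
    simp [ramp, indicator_of_notMem, hxb, not_lt.2 (hxb.trans (le_add_of_nonneg_right hd.le)),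
      max_eq_left (min_le_of_right_le this)]
  · have hx' : x ≠ 0 := (hb.trans hbx).ne'
    rw [ramp, max_eq_left hbx.le, mul_div_cancel₀ _ hx', indicator_of_mem (mem_Ioi.2 hbx)]
    refine ⟨?_, max_le zero_le_one (min_le_left _ _)⟩
    by_cases hbdx : b + d < x
    · rw [indicator_of_mem (mem_Ioi.2 hbdx), Pi.one_apply,
        min_eq_left ((one_le_div hd).2 (by linarith)), max_eq_right zero_le_one]
    · rw [indicator_of_notMem (show x ∉ Ioi (b + d) from hbdx)]
      exact le_max_left _ _

lemma exists_polynomial_le_le_add {a b : ℝ} {f : ℝ → ℝ} (hf : ContinuousOn f (Icc a b)) {ε : ℝ}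
    (hε : 0 < ε) : ∃ q : ℝ[X], ∀ x ∈ Icc a b, f x ≤ q.eval x ∧ q.eval x ≤ f x + ε := by
  obtain ⟨p, hp⟩ := exists_polynomial_near_of_continuousOn a b f hf (ε / 2) (half_pos hε)
  refine ⟨p + C (ε / 2), fun x hx => ?_⟩
  have := abs_lt.1 (hp x hx)
  simp only [eval_add, eval_C]
  constructor <;> linarith

lemma exists_polynomial_sub_le_le {a b : ℝ} {f : ℝ → ℝ} (hf : ContinuousOn f (Icc a b)) {ε : ℝ}
    (hε : 0 < ε) : ∃ q : ℝ[X], ∀ x ∈ Icc a b, f x - ε ≤ q.eval x ∧ q.eval x ≤ f x := by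
  obtain ⟨p, hp⟩ := exists_polynomial_near_of_continuousOn a b f hf (ε / 2) (half_pos hε)
  refine ⟨p - C (ε / 2), fun x hx => ?_⟩
  have := abs_lt.1 (hp x hx)
  simp only [eval_sub, eval_C]
  constructor <;> linarith

lemma exists_indicator_le_mul_polynomial {c₁ c₂ ε : ℝ} (hc₁ : 0 < c₁) (hc : c₁ < c₂)
    (hε : 0 < ε) : ∃ q : ℝ[X], ∀ x ∈ Icc (0 : ℝ) 1,
      (Ioi c₂).indicator 1 x ≤ x * q.eval x ∧ x * q.eval x ≤ (Ioi c₁).indicator 1 x + ε * x := by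
  obtain ⟨q, hq⟩ := exists_polynomial_le_le_add (continuous_ramp hc₁ (c₂ - c₁)).continuousOn hε
  refine ⟨q, fun x hx => ?_⟩
  have hramp := indicator_le_mul_ramp_le_indicator (x := x) hc₁ (sub_pos.2 hc)
  rw [add_sub_cancel] at hramp
  have hqx := hq x hx
  constructor <;> nlinarith [hx.1]

lemma exists_mul_polynomial_le_indicator {c₁ c₂ ε : ℝ} (hc₁ : 0 < c₁) (hc : c₁ < c₂)
    (hε : 0 < ε) : ∃ q : ℝ[X], ∀ x ∈ Icc (0 : ℝ) 1,
      (Ioi c₂).indicator 1 x - ε * x ≤ x * q.eval x ∧ x * q.eval x ≤ (Ioi c₁).indicator 1 x := by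
  obtain ⟨q, hq⟩ := exists_polynomial_sub_le_le (continuous_ramp hc₁ (c₂ - c₁)).continuousOn hε
  refine ⟨q, fun x hx => ?_⟩
  have hramp := indicator_le_mul_ramp_le_indicator (x := x) hc₁ (sub_pos.2 hc)
  rw [add_sub_cancel] at hramp
  have hqx := hq x hx
  constructor <;> nlinarith [hx.1]

variable {γ : ℝ}

lemma exp_neg_pow_succ (u : ℝ) (k : ℕ) : exp (-u) ^ (k + 1) = exp (-(((k : ℝ) + 1) * u)) := by
  rw [← exp_nat_mul]; push_cast; ring_nf

lemma integrableOn_exp_neg_pow_mul_rpow (hγ : 0 < γ) (k : ℕ) :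
    IntegrableOn (fun u : ℝ => exp (-u) ^ (k + 1) * u ^ (γ - 1)) (Ioi 0) := by
  refine (integrableOn_rpow_mul_exp_neg_mul_rpow (s := γ - 1) (p := 1) (by linarith) zero_lt_one
    (Nat.cast_add_one_pos k)).congr_fun (fun u _ => ?_) measurableSet_Ioi
  dsimp only
  rw [rpow_one, exp_neg_pow_succ, neg_mul, mul_comm]

lemma integral_exp_neg_pow_mul_rpow (hγ : 0 < γ) (k : ℕ) :
    ∫ u in Ioi (0 : ℝ), exp (-u) ^ (k + 1) * u ^ (γ - 1) = ((k : ℝ) + 1) ^ (-γ) * Gamma γ := by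
  have hk : (0 : ℝ) < k + 1 := Nat.cast_add_one_pos k
  simp_rw [exp_neg_pow_succ, mul_comm (exp _)]
  rw [integral_rpow_mul_exp_neg_mul_Ioi hγ hk, one_div, inv_rpow hk.le, rpow_neg hk.le]

lemma mul_eval_eq_sum (q : ℝ[X]) (x : ℝ) :
    x * q.eval x = ∑ k ∈ Finset.range (q.natDegree + 1), q.coeff k * x ^ (k + 1) := by
  rw [eval_eq_sum_range, Finset.mul_sum]
  exact Finset.sum_congr rfl fun k _ => by ring

lemma integrableOn_mul_eval_exp_neg_mul_rpow (hγ : 0 < γ) (q : ℝ[X]) :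
    IntegrableOn (fun u : ℝ => exp (-u) * q.eval (exp (-u)) * u ^ (γ - 1)) (Ioi 0) := by
  simp_rw [mul_eval_eq_sum, Finset.sum_mul, mul_assoc]
  exact integrable_finsetSum _ fun k _ => (integrableOn_exp_neg_pow_mul_rpow hγ k).const_mul _

lemma integral_mul_eval_exp_neg_mul_rpow (hγ : 0 < γ) (q : ℝ[X]) :
    ∫ u in Ioi (0 : ℝ), exp (-u) * q.eval (exp (-u)) * u ^ (γ - 1)
      = ∑ k ∈ Finset.range (q.natDegree + 1), q.coeff k * (((k : ℝ) + 1) ^ (-γ) * Gamma γ) := by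
  simp_rw [mul_eval_eq_sum, Finset.sum_mul, mul_assoc]
  rw [integral_finsetSum _ fun k _ => (integrableOn_exp_neg_pow_mul_rpow hγ k).const_mul _]
  simp_rw [integral_const_mul, integral_exp_neg_pow_mul_rpow hγ]

lemma indicator_Ioi_exp_neg (s u : ℝ) :
    (Ioi (exp (-s))).indicator (1 : ℝ → ℝ) (exp (-u)) = (Iio s).indicator 1 u := by
  simp only [indicator_apply, mem_Ioi, mem_Iio, exp_lt_exp, neg_lt_neg_iff, Pi.one_apply]

lemma indicator_one_mul_rpow (s γ u : ℝ) :
    (Iio s).indicator 1 u * u ^ (γ - 1) = (Iio s).indicator (fun v => v ^ (γ - 1)) u := by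
  by_cases h : u ∈ Iio s <;> simp [h]

lemma integrableOn_indicator_rpow (hγ : 0 < γ) (s : ℝ) :
    IntegrableOn ((Iio s).indicator fun u : ℝ => u ^ (γ - 1)) (Ioi 0) := by
  have h := intervalIntegral.intervalIntegrable_rpow' (r := γ - 1) (by linarith) (a := 0)
    (b := max s 0)
  rw [intervalIntegrable_iff_integrableOn_Ioc_of_le (le_max_right s 0)] at h
  rw [IntegrableOn, integrable_indicator_iff measurableSet_Iio, IntegrableOn,
    Measure.restrict_restrict measurableSet_Iio, Iio_inter_Ioi]
  exact h.mono_set fun u hu => ⟨hu.1, hu.2.le.trans (le_max_left s 0)⟩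

lemma integral_indicator_rpow (hγ : 0 < γ) {s : ℝ} (hs : 0 ≤ s) :
    ∫ u in Ioi (0 : ℝ), (Iio s).indicator (fun u => u ^ (γ - 1)) u = s ^ γ / γ := by
  rw [setIntegral_indicator measurableSet_Iio, Ioi_inter_Iio, ← integral_Ioc_eq_integral_Ioo,
    ← intervalIntegral.integral_of_le hs, integral_rpow (Or.inl (by linarith)), sub_add_cancel,
    zero_rpow hγ.ne', sub_zero]

lemma integrableOn_indicator_exp_neg_mul_rpow (hγ : 0 < γ) (s c : ℝ) :
    IntegrableOn (fun u : ℝ => ((Ioi (exp (-s))).indicator 1 (exp (-u)) + c * exp (-u))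
      * u ^ (γ - 1)) (Ioi 0) := by
  simp_rw [indicator_Ioi_exp_neg, add_mul, indicator_one_mul_rpow, mul_assoc]
  exact (integrableOn_indicator_rpow hγ s).add ((GammaIntegral_convergent hγ).const_mul c)

lemma integral_indicator_exp_neg_mul_rpow (hγ : 0 < γ) {s : ℝ} (hs : 0 ≤ s) (c : ℝ) :
    ∫ u in Ioi (0 : ℝ), ((Ioi (exp (-s))).indicator 1 (exp (-u)) + c * exp (-u)) * u ^ (γ - 1)
      = s ^ γ / γ + c * Gamma γ := by
  simp_rw [indicator_Ioi_exp_neg, add_mul, indicator_one_mul_rpow, mul_assoc]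
  rw [integral_add (integrableOn_indicator_rpow hγ s) ((GammaIntegral_convergent hγ).const_mul c),
    integral_const_mul, integral_indicator_rpow hγ hs, Gamma_eq_integral hγ]

lemma setIntegral_comp_exp_neg_mul_rpow_mono {φ ψ : ℝ → ℝ}
    (hφ : IntegrableOn (fun u : ℝ => φ (exp (-u)) * u ^ (γ - 1)) (Ioi 0))
    (hψ : IntegrableOn (fun u : ℝ => ψ (exp (-u)) * u ^ (γ - 1)) (Ioi 0))
    (hle : ∀ x ∈ Icc (0 : ℝ) 1, φ x ≤ ψ x) :
    ∫ u in Ioi (0 : ℝ), φ (exp (-u)) * u ^ (γ - 1)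
      ≤ ∫ u in Ioi (0 : ℝ), ψ (exp (-u)) * u ^ (γ - 1) :=
  setIntegral_mono_on hφ hψ measurableSet_Ioi fun u (hu : 0 < u) =>
    mul_le_mul_of_nonneg_right (hle _ ⟨(exp_pos _).le, exp_le_one_iff.2 (by linarith)⟩)
      (rpow_nonneg hu.le _)

variable {μ : Measure ℝ} {t a : ℝ}

lemma measure_Iio_lt_top_of_integrable (ht : 0 < t)
    (hμ : Integrable (fun E : ℝ => exp (-t * E)) μ) (x : ℝ) : μ (Iio x) < ⊤ := by
  refine (measure_mono fun E (hE : E < x) => ?_).trans_lt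
    (hμ.measure_norm_ge_lt_top (exp_pos (-t * x)))
  show exp (-t * x) ≤ ‖exp (-t * E)‖
  rw [norm_of_nonneg (exp_pos _).le, exp_le_exp]
  nlinarith

lemma indicator_Ioi_exp_neg_one (ht : 0 < t) (E : ℝ) :
    (Ioi (exp (-1))).indicator (1 : ℝ → ℝ) (exp (-t * E)) = (Iio t⁻¹).indicator 1 E := by
  have : -1 < -t * E ↔ E < t⁻¹ := by
    rw [neg_mul, neg_lt_neg_iff, ← lt_div_iff₀' ht, one_div]
  simp only [indicator_apply, mem_Ioi, mem_Iio, exp_lt_exp, this, Pi.one_apply]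

lemma integrable_indicator_Ioi_exp_neg_one (ht : 0 < t)
    (hμ : Integrable (fun E : ℝ => exp (-t * E)) μ) :
    Integrable (fun E : ℝ => (Ioi (exp (-1))).indicator (1 : ℝ → ℝ) (exp (-t * E))) μ := by
  simp_rw [indicator_Ioi_exp_neg_one ht]
  exact (integrable_indicator_iff measurableSet_Iio).2
    (integrableOn_const (measure_Iio_lt_top_of_integrable ht hμ _).ne)

lemma integral_indicator_Ioi_exp_neg_one (ht : 0 < t) :
    ∫ E, (Ioi (exp (-1))).indicator (1 : ℝ → ℝ) (exp (-t * E)) ∂μ = (μ (Iio t⁻¹)).toReal := by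
  simp_rw [indicator_Ioi_exp_neg_one ht]
  rw [integral_indicator_one measurableSet_Iio, measureReal_def]

lemma exp_neg_mul_pow_succ (t E : ℝ) (k : ℕ) :
    exp (-t * E) ^ (k + 1) = exp (-(((k : ℝ) + 1) * t) * E) := by
  rw [← exp_nat_mul]; push_cast; ring_nf

lemma integrable_mul_eval_exp_neg_mul
    (hfin : ∀ t : ℝ, 0 < t → Integrable (fun E : ℝ => exp (-t * E)) μ) (ht : 0 < t) (q : ℝ[X]) :
    Integrable (fun E : ℝ => exp (-t * E) * q.eval (exp (-t * E))) μ := by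
  simp_rw [mul_eval_eq_sum, exp_neg_mul_pow_succ]
  exact integrable_finsetSum _ fun k _ => (hfin _ (by positivity)).const_mul _

lemma integral_mul_eval_exp_neg_mul
    (hfin : ∀ t : ℝ, 0 < t → Integrable (fun E : ℝ => exp (-t * E)) μ) (ht : 0 < t) (q : ℝ[X]) :
    ∫ E, exp (-t * E) * q.eval (exp (-t * E)) ∂μ
      = ∑ k ∈ Finset.range (q.natDegree + 1),
          q.coeff k * ∫ E, exp (-(((k : ℝ) + 1) * t) * E) ∂μ := by
  simp_rw [mul_eval_eq_sum, exp_neg_mul_pow_succ]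
  rw [integral_finsetSum _ fun k _ => (hfin _ (by positivity)).const_mul _]
  simp_rw [integral_const_mul]

lemma integral_comp_exp_neg_mul_mono (hsupp : μ (Iio 0) = 0) (ht : 0 ≤ t) {φ ψ : ℝ → ℝ}
    (hφ : Integrable (fun E : ℝ => φ (exp (-t * E))) μ)
    (hψ : Integrable (fun E : ℝ => ψ (exp (-t * E))) μ)
    (hle : ∀ x ∈ Icc (0 : ℝ) 1, φ x ≤ ψ x) :
    ∫ E, φ (exp (-t * E)) ∂μ ≤ ∫ E, ψ (exp (-t * E)) ∂μ := by
  have hpos : ∀ᵐ E ∂μ, 0 ≤ E := by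
    rw [ae_iff]
    simp only [not_le]
    exact hsupp
  refine integral_mono_ae hφ hψ ?_
  filter_upwards [hpos] with E hE
  exact hle _ ⟨(exp_pos _).le, exp_le_one_iff.2 (by nlinarith)⟩

lemma tendsto_rpow_mul_integral_exp_neg_const_mul
    (hasym : Tendsto (fun t : ℝ => (∫ E, exp (-t * E) ∂μ) * t ^ γ) (𝓝[>] 0) (𝓝 a))
    {K : ℝ} (hK : 0 < K) :
    Tendsto (fun t : ℝ => t ^ γ * ∫ E, exp (-(K * t) * E) ∂μ) (𝓝[>] 0) (𝓝 (K ^ (-γ) * a)) := by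
  have hKt : Tendsto (K * ·) (𝓝[>] (0 : ℝ)) (𝓝[>] 0) := by
    simpa using (continuous_const_mul K).continuousWithinAt.tendsto_nhdsWithin
      (x := (0 : ℝ)) fun t (ht : t ∈ Ioi 0) => mem_Ioi.2 (mul_pos hK ht)
  refine ((hasym.comp hKt).const_mul (K ^ (-γ))).congr' ?_
  filter_upwards [self_mem_nhdsWithin] with t (ht : 0 < t)
  rw [Function.comp_apply, mul_rpow hK.le ht.le, rpow_neg hK.le]
  field_simp

lemma tendsto_rpow_mul_integral_mul_eval (hγ : 0 < γ)
    (hfin : ∀ t : ℝ, 0 < t → Integrable (fun E : ℝ => exp (-t * E)) μ)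
    (hasym : Tendsto (fun t : ℝ => (∫ E, exp (-t * E) ∂μ) * t ^ γ) (𝓝[>] 0) (𝓝 a)) (q : ℝ[X]) :
    Tendsto (fun t : ℝ => t ^ γ * ∫ E, exp (-t * E) * q.eval (exp (-t * E)) ∂μ) (𝓝[>] 0)
      (𝓝 (a / Gamma γ * ∫ u in Ioi (0 : ℝ), exp (-u) * q.eval (exp (-u)) * u ^ (γ - 1))) := by
  have hΓ : Gamma γ ≠ 0 := (Gamma_pos_of_pos hγ).ne'
  have hlim : a / Gamma γ * ∫ u in Ioi (0 : ℝ), exp (-u) * q.eval (exp (-u)) * u ^ (γ - 1)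
      = ∑ k ∈ Finset.range (q.natDegree + 1), q.coeff k * (((k : ℝ) + 1) ^ (-γ) * a) := by
    rw [integral_mul_eval_exp_neg_mul_rpow hγ, Finset.mul_sum]
    refine Finset.sum_congr rfl fun k _ => ?_
    field_simp
  rw [hlim]
  refine (tendsto_finsetSum _ fun k _ => (tendsto_rpow_mul_integral_exp_neg_const_mul hasym
    (Nat.cast_add_one_pos k)).const_mul (q.coeff k)).congr' ?_
  filter_upwards [self_mem_nhdsWithin] with t (ht : 0 < t)
  rw [integral_mul_eval_exp_neg_mul hfin ht, Finset.mul_sum]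
  exact Finset.sum_congr rfl fun k _ => by ring

lemma tendsto_div_Gamma_mul_rpow_div_add {l : Filter ℝ} (hγ : 0 < γ) (a : ℝ) {s c : ℝ → ℝ}
    (hs : Tendsto s l (𝓝 1)) (hc : Tendsto c l (𝓝 0)) :
    Tendsto (fun δ => a / Gamma γ * (s δ ^ γ / γ + c δ * Gamma γ)) l (𝓝 (a / Gamma (γ + 1))) := by
  have h := (((hs.rpow_const (Or.inr hγ.le)).div_const γ).add (hc.mul_const (Gamma γ))).const_mul
    (a / Gamma γ)
  rwa [one_rpow, zero_mul, add_zero, mul_one_div, div_div, mul_comm _ γ, ← Gamma_add_one hγ.ne']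
    at h

lemma eventually_rpow_mul_measure_Iio_inv_lt (ha : 0 < a) (hγ : 0 < γ) (hsupp : μ (Iio 0) = 0)
    (hfin : ∀ t : ℝ, 0 < t → Integrable (fun E : ℝ => exp (-t * E)) μ)
    (hasym : Tendsto (fun t : ℝ => (∫ E, exp (-t * E) ∂μ) * t ^ γ) (𝓝[>] 0) (𝓝 a)) {v : ℝ}
    (hv : a / Gamma (γ + 1) < v) : ∀ᶠ t in 𝓝[>] 0, t ^ γ * (μ (Iio t⁻¹)).toReal < v := by
  have hbound := tendsto_div_Gamma_mul_rpow_div_add (l := 𝓝[>] 0) hγ a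
    (((continuous_const_add (1 : ℝ)).tendsto' 0 1 (add_zero 1)).mono_left nhdsWithin_le_nhds)
    (tendsto_id.mono_left nhdsWithin_le_nhds)
  obtain ⟨δ, hδv, hδ : 0 < δ⟩ :=
    ((hbound.eventually (gt_mem_nhds hv)).and self_mem_nhdsWithin).exists
  obtain ⟨q, hq⟩ := exists_indicator_le_mul_polynomial (exp_pos (-(1 + δ)))
    (exp_lt_exp.2 (by linarith : -(1 + δ) < -1)) hδ
  have hlim : a / Gamma γ * ∫ u in Ioi (0 : ℝ), exp (-u) * q.eval (exp (-u)) * u ^ (γ - 1)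
      ≤ a / Gamma γ * ((1 + δ) ^ γ / γ + δ * Gamma γ) := by
    rw [← integral_indicator_exp_neg_mul_rpow hγ (by linarith : 0 ≤ 1 + δ) δ]
    exact mul_le_mul_of_nonneg_left (setIntegral_comp_exp_neg_mul_rpow_mono
      (φ := fun x => x * q.eval x) (integrableOn_mul_eval_exp_neg_mul_rpow hγ q)
      (integrableOn_indicator_exp_neg_mul_rpow hγ _ _) fun x hx => (hq x hx).2) (by positivity)
  have hpoly := tendsto_rpow_mul_integral_mul_eval hγ hfin hasym q
  filter_upwards [self_mem_nhdsWithin, hpoly.eventually (gt_mem_nhds (hlim.trans_lt hδv))]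
    with t (ht : 0 < t) hlt
  refine lt_of_le_of_lt ?_ hlt
  rw [← integral_indicator_Ioi_exp_neg_one ht]
  exact mul_le_mul_of_nonneg_left (integral_comp_exp_neg_mul_mono hsupp ht.le
    (integrable_indicator_Ioi_exp_neg_one ht (hfin t ht))
    (integrable_mul_eval_exp_neg_mul hfin ht q)
    fun x hx => (hq x hx).1) (rpow_nonneg ht.le _)

lemma eventually_lt_rpow_mul_measure_Iio_inv (ha : 0 < a) (hγ : 0 < γ) (hsupp : μ (Iio 0) = 0)
    (hfin : ∀ t : ℝ, 0 < t → Integrable (fun E : ℝ => exp (-t * E)) μ)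
    (hasym : Tendsto (fun t : ℝ => (∫ E, exp (-t * E) ∂μ) * t ^ γ) (𝓝[>] 0) (𝓝 a)) {v : ℝ}
    (hv : v < a / Gamma (γ + 1)) : ∀ᶠ t in 𝓝[>] 0, v < t ^ γ * (μ (Iio t⁻¹)).toReal := by
  have hbound := tendsto_div_Gamma_mul_rpow_div_add (l := 𝓝[>] 0) hγ a
    (((continuous_sub_left (1 : ℝ)).tendsto' 0 1 (sub_zero 1)).mono_left nhdsWithin_le_nhds)
    ((continuous_neg.tendsto' (0 : ℝ) 0 neg_zero).mono_left nhdsWithin_le_nhds)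
  obtain ⟨δ, hδv, hδ : δ ∈ Ioo 0 1⟩ :=
    ((hbound.eventually (lt_mem_nhds hv)).and (Ioo_mem_nhdsGT zero_lt_one)).exists
  obtain ⟨q, hq⟩ := exists_mul_polynomial_le_indicator (exp_pos (-1))
    (exp_lt_exp.2 (by linarith [hδ.1] : -1 < -(1 - δ))) hδ.1
  have hlim : a / Gamma γ * ((1 - δ) ^ γ / γ + -δ * Gamma γ)
      ≤ a / Gamma γ * ∫ u in Ioi (0 : ℝ), exp (-u) * q.eval (exp (-u)) * u ^ (γ - 1) := by
    rw [← integral_indicator_exp_neg_mul_rpow hγ (by linarith [hδ.2] : 0 ≤ 1 - δ) (-δ)]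
    refine mul_le_mul_of_nonneg_left (setIntegral_comp_exp_neg_mul_rpow_mono
      (φ := fun x => (Ioi (exp (-(1 - δ)))).indicator 1 x + -δ * x)
      (ψ := fun x => x * q.eval x)
      (integrableOn_indicator_exp_neg_mul_rpow hγ _ _)
      (integrableOn_mul_eval_exp_neg_mul_rpow hγ q) fun x hx => ?_) (by positivity)
    rw [neg_mul, ← sub_eq_add_neg]
    exact (hq x hx).1
  have hpoly := tendsto_rpow_mul_integral_mul_eval hγ hfin hasym q
  filter_upwards [self_mem_nhdsWithin, hpoly.eventually (lt_mem_nhds (hδv.trans_le hlim))]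
    with t (ht : 0 < t) hlt
  refine hlt.trans_le ?_
  rw [← integral_indicator_Ioi_exp_neg_one ht]
  exact mul_le_mul_of_nonneg_left (integral_comp_exp_neg_mul_mono hsupp ht.le
    (integrable_mul_eval_exp_neg_mul hfin ht q)
    (integrable_indicator_Ioi_exp_neg_one ht (hfin t ht))
    fun x hx => (hq x hx).2) (rpow_nonneg ht.le _)

end Karamata

/-- Karamata Tauberian theorem (counting-measure version): let `μ` be a non-negative
Borel measure on `[0,∞)` whose Laplace transform `L(t) = ∫ e^{−tE} dμ(E)` is finite
for all `t > 0` and satisfies `L(t) = a t^{−γ}(1+o(1))` as `t ↓ 0` for some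
`a, γ > 0`. Then `μ([0,E)) = (a/Γ(γ+1)) E^γ (1+o(1))` as `E → ∞`. -/
theorem stmt13 (μ : Measure ℝ) (a γ : ℝ) (ha : 0 < a) (hγ : 0 < γ)
    (hsupp : μ (Set.Iio 0) = 0)
    (hfin : ∀ t : ℝ, 0 < t →
      (∫⁻ E, ENNReal.ofReal (Real.exp (-t * E)) ∂μ) < ⊤)
    (hasym : Tendsto
      (fun t : ℝ => (∫⁻ E, ENNReal.ofReal (Real.exp (-t * E)) ∂μ).toReal * t ^ γ)
      (nhdsWithin 0 (Set.Ioi 0)) (nhds a)) :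
    Tendsto (fun E : ℝ => (μ (Set.Iio E)).toReal / E ^ γ) atTop
      (nhds (a / Real.Gamma (γ + 1))) := by
  have hmeas : ∀ t : ℝ, AEStronglyMeasurable (fun E : ℝ => exp (-t * E)) μ := fun t =>
    (by fun_prop : Continuous fun E : ℝ => exp (-t * E)).aestronglyMeasurable
  have hpos : ∀ t : ℝ, 0 ≤ᵐ[μ] fun E : ℝ => exp (-t * E) := fun t =>
    ae_of_all _ fun E => (exp_pos _).le
  have hint : ∀ t : ℝ, 0 < t → Integrable (fun E : ℝ => exp (-t * E)) μ := fun t ht =>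
    (lintegral_ofReal_ne_top_iff_integrable (hmeas t) (hpos t)).1 (hfin t ht).ne
  have hasym' : Tendsto (fun t : ℝ => (∫ E, exp (-t * E) ∂μ) * t ^ γ) (𝓝[>] 0) (𝓝 a) := by
    simpa only [integral_eq_lintegral_of_nonneg_ae (hpos _) (hmeas _)] using hasym
  have hsmall : Tendsto (fun t : ℝ => t ^ γ * (μ (Iio t⁻¹)).toReal) (𝓝[>] 0)
      (𝓝 (a / Gamma (γ + 1))) := tendsto_order.2
    ⟨fun v hv => Karamata.eventually_lt_rpow_mul_measure_Iio_inv ha hγ hsupp hint hasym' hv,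
      fun v hv => Karamata.eventually_rpow_mul_measure_Iio_inv_lt ha hγ hsupp hint hasym' hv⟩
  refine (hsmall.comp tendsto_inv_atTop_nhdsGT_zero).congr' ?_
  filter_upwards [eventually_gt_atTop 0] with E hE
  rw [Function.comp_apply, inv_inv, inv_rpow hE.le, inv_mul_eq_div]
end

section
/- Let H₀ be self-adjoint, P an orthogonal projection with P H₀ Q = 0 (Q = I − P), and suppose inf σ(Q H₀ Q restricted to Ran Q) ≥ c. If 0 ≤ V ≤ M and E + (δ⁻¹ − 1)M < c for some δ ∈ (0,1), then N(H₀ + V; E) ≤ N(P(H₀ + (1−δ)V)P restricted to Ran P; E), where N denotes the eigenvalue counting function below E. -/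
/-!
Split `f = P f + Q f`. Since `P H₀ Q = 0` the form of `H₀` splits exactly, and the
Cauchy–Schwarz/AM–GM bound `2 |Re⟪V u, v⟫| ≤ δ⟪V u, u⟫ + δ⁻¹⟪V v, v⟫` for `V ≥ 0` gives
`H₀ + V ≥ P (H₀ + (1 - δ) V) P + Q (H₀ + (1 - δ⁻¹) V) Q`. On `Ran Q` the second operator is
`≥ c - (δ⁻¹ - 1) M > E`, so if `⟪(H₀ + V) f, f⟫ < E ‖f‖²` then `P f` satisfies the same strict
bound for `P (H₀ + (1 - δ) V) P`; in particular `P f ≠ 0`. Hence `P` maps every trial subspace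
for `H₀ + V` injectively onto a trial subspace of `Ran P`, and min-max gives the inequality.
-/

open Module

/-- Min-max eigenvalue counting function of the quadratic form `q` on the domain `D`. -/
noncomputable def specCount {H : Type*} [NormedAddCommGroup H] [InnerProductSpace ℂ H]
    (q : H → ℝ) (D : Set H) (E : ℝ) : ℕ∞ :=
  ⨆ (V : Submodule ℂ H) (_ : (V : Set H) ⊆ D ∧ ∀ f ∈ V, f ≠ 0 → q f < E * ‖f‖ ^ 2),
    (Module.finrank ℂ V : ℕ∞)

section CountingFunction

variable {H H' : Type*} [NormedAddCommGroup H] [InnerProductSpace ℂ H]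
  [NormedAddCommGroup H'] [InnerProductSpace ℂ H']

theorem specCount_le_of_linearMap {q : H → ℝ} {q' : H' → ℝ} {D : Set H} {D' : Set H'} {E : ℝ}
    (T : H →ₗ[ℂ] H') (hTD : ∀ f ∈ D, T f ∈ D') (hq'0 : q' 0 = 0)
    (hT : ∀ f ∈ D, f ≠ 0 → q f < E * ‖f‖ ^ 2 → q' (T f) < E * ‖T f‖ ^ 2) :
    specCount q D E ≤ specCount q' D' E := by
  refine iSup₂_le fun W ⟨hWD, hWq⟩ => ?_
  have hTW : ∀ f ∈ W, f ≠ 0 → q' (T f) < E * ‖T f‖ ^ 2 :=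
    fun f hf hf0 => hT f (hWD hf) hf0 (hWq f hf hf0)
  have hinj : Function.Injective (T.domRestrict W) := by
    refine LinearMap.injective_domRestrict_iff.mpr (Submodule.disjoint_def.mpr ?_)
    intro f hfW hfker
    by_contra hf0
    have := hTW f hfW hf0
    rw [LinearMap.mem_ker.mp hfker, hq'0] at this
    simp at this
  refine le_iSup₂_of_le (W.map T) ⟨?_, ?_⟩ ?_
  · rintro _ ⟨f, hf, rfl⟩
    exact hTD f (hWD hf)
  · rintro _ ⟨f, hf, rfl⟩ hTf0
    exact hTW f hf (by rintro rfl; simp at hTf0)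
  · rw [← LinearMap.range_domRestrict, LinearMap.finrank_range_of_inj hinj]

end CountingFunction

section QuadraticForm

variable {H : Type*} [NormedAddCommGroup H] [InnerProductSpace ℂ H]

theorem qform_zero (A : H →L[ℂ] H) : qform A 0 = 0 := by
  simp [qform]

theorem qform_add (A B : H →L[ℂ] H) (f : H) : qform (A + B) f = qform A f + qform B f := by
  simp [qform]

theorem qform_ofReal_smul (r : ℝ) (A : H →L[ℂ] H) (f : H) :
    qform ((r : ℂ) • A) f = r * qform A f := by
  simp [qform]

theorem qform_ofReal_smul_add_ofReal_smul {A : H →L[ℂ] H} (hA : (A : H →ₗ[ℂ] H).IsSymmetric)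
    (a b : ℝ) (u v : H) :
    qform A ((a : ℂ) • u + (b : ℂ) • v)
      = a ^ 2 * qform A u + b ^ 2 * qform A v + 2 * (a * b) * (inner ℂ (A u) v).re := by
  have hvu : inner ℂ (A v) u = starRingEnd ℂ (inner ℂ (A u) v) := by
    have hA' : ∀ x y, inner ℂ (A x) y = inner ℂ x (A y) := hA
    rw [hA', inner_conj_symm]
  simp only [qform, map_add, map_smul, inner_add_left, inner_add_right, inner_smul_left,
    inner_smul_right, Complex.add_re, Complex.mul_re, hvu, Complex.conj_ofReal,
    Complex.conj_re, Complex.conj_im, Complex.ofReal_re, Complex.ofReal_im]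
  ring

theorem qform_add_apply {A : H →L[ℂ] H} (hA : (A : H →ₗ[ℂ] H).IsSymmetric) (u v : H) :
    qform A (u + v) = qform A u + qform A v + 2 * (inner ℂ (A u) v).re := by
  simpa using qform_ofReal_smul_add_ofReal_smul hA 1 1 u v

theorem one_sub_mul_qform_add_one_sub_inv_mul_qform_le {V : H →L[ℂ] H}
    (hV : (V : H →ₗ[ℂ] H).IsSymmetric) (hV0 : ∀ f, 0 ≤ qform V f) {δ : ℝ} (hδ : 0 < δ)
    (u v : H) :
    (1 - δ) * qform V u + (1 - δ⁻¹) * qform V v ≤ qform V (u + v) := by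
  have hpos := hV0 ((√δ : ℂ) • u + (√δ⁻¹ : ℂ) • v)
  rw [qform_ofReal_smul_add_ofReal_smul hV, Real.sq_sqrt hδ.le,
    Real.sq_sqrt (inv_nonneg.mpr hδ.le), ← Real.sqrt_mul hδ.le, mul_inv_cancel₀ hδ.ne',
    Real.sqrt_one] at hpos
  rw [qform_add_apply hV]
  linarith

end QuadraticForm

section Projection

variable {H : Type*} [NormedAddCommGroup H] [InnerProductSpace ℂ H] {P : H →L[ℂ] H}

theorem apply_apply_of_comp_self (hPproj : P ∘L P = P) (f : H) : P (P f) = P f :=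
  congrArg (fun T : H →L[ℂ] H => T f) hPproj

theorem one_sub_apply_eq (f : H) : (1 - P) f = f - P f := by
  simp

theorem inner_apply_one_sub_apply (hP : (P : H →ₗ[ℂ] H).IsSymmetric) (hPproj : P ∘L P = P)
    (f : H) : inner ℂ (P f) ((1 - P) f) = 0 := by
  have hP' : ∀ x y, inner ℂ (P x) y = inner ℂ x (P y) := hP
  rw [hP', one_sub_apply_eq, map_sub, apply_apply_of_comp_self hPproj,
    sub_self, inner_zero_right]

theorem norm_sq_eq_norm_apply_sq_add_norm_one_sub_apply_sq (hP : (P : H →ₗ[ℂ] H).IsSymmetric)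
    (hPproj : P ∘L P = P) (f : H) : ‖f‖ ^ 2 = ‖P f‖ ^ 2 + ‖(1 - P) f‖ ^ 2 := by
  have h := norm_add_sq_eq_norm_sq_add_norm_sq_of_inner_eq_zero _ _
    (inner_apply_one_sub_apply hP hPproj f)
  rw [one_sub_apply_eq, add_sub_cancel] at h
  rw [one_sub_apply_eq]
  simpa only [sq] using h

theorem qform_eq_qform_apply_add_qform_one_sub_apply {H₀ : H →L[ℂ] H}
    (hH₀ : (H₀ : H →ₗ[ℂ] H).IsSymmetric) (hP : (P : H →ₗ[ℂ] H).IsSymmetric)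
    (hPQ : P ∘L (H₀ ∘L (1 - P)) = 0) (f : H) :
    qform H₀ f = qform H₀ (P f) + qform H₀ ((1 - P) f) := by
  have hH₀' : ∀ x y, inner ℂ (H₀ x) y = inner ℂ x (H₀ y) := hH₀
  have hP' : ∀ x y, inner ℂ (P x) y = inner ℂ x (P y) := hP
  have hcross : inner ℂ (H₀ (P f)) ((1 - P) f) = 0 := by
    rw [hH₀', hP']
    exact (congrArg (fun T : H →L[ℂ] H => inner ℂ f (T f)) hPQ).trans (inner_zero_right _)
  conv_lhs => rw [← add_sub_cancel (P f) f, ← one_sub_apply_eq]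
  rw [qform_add_apply hH₀, hcross, Complex.zero_re, mul_zero, add_zero]

/-- The operator inequality `H₀ + V ≥ P (H₀ + (1 - δ) V) P + Q (H₀ + (1 - δ⁻¹) V) Q`. -/
theorem qform_compress_add_qform_compress_le {H₀ V : H →L[ℂ] H}
    (hH₀ : (H₀ : H →ₗ[ℂ] H).IsSymmetric) (hP : (P : H →ₗ[ℂ] H).IsSymmetric)
    (hPQ : P ∘L (H₀ ∘L (1 - P)) = 0) (hV : (V : H →ₗ[ℂ] H).IsSymmetric)
    (hV0 : ∀ f, 0 ≤ qform V f) {δ : ℝ} (hδ : 0 < δ) (f : H) :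
    qform (H₀ + ((1 - δ : ℝ) : ℂ) • V) (P f) + qform (H₀ + ((1 - δ⁻¹ : ℝ) : ℂ) • V) ((1 - P) f)
      ≤ qform (H₀ + V) f := by
  have hV' := one_sub_mul_qform_add_one_sub_inv_mul_qform_le hV hV0 hδ (P f) ((1 - P) f)
  have hsum : P f + (1 - P) f = f := by rw [one_sub_apply_eq, add_sub_cancel]
  rw [hsum] at hV'
  simp only [qform_add, qform_ofReal_smul,
    qform_eq_qform_apply_add_qform_one_sub_apply hH₀ hP hPQ f]
  linarith

end Projection

/-- Let `H₀` be self-adjoint, `P` an orthogonal projection with `P H₀ Q = 0`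
(`Q = I − P`), and suppose `inf σ(Q H₀ Q |_{Ran Q}) ≥ c`. If `0 ≤ V ≤ M` and
`E + (δ⁻¹ − 1) M < c` for some `δ ∈ (0,1)`, then
`N(H₀ + V; E) ≤ N(P(H₀ + (1−δ)V)P |_{Ran P}; E)`. -/
theorem stmt17 {H : Type*} [NormedAddCommGroup H] [InnerProductSpace ℂ H] [CompleteSpace H]
    (H₀ V P : H →L[ℂ] H) (M c E δ : ℝ)
    (hH₀ : IsSelfAdjoint H₀) (hP : IsSelfAdjoint P) (hPproj : P ∘L P = P)
    (hPQ : P ∘L (H₀ ∘L (1 - P)) = 0)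
    (hgap : ∀ f : H, (1 - P) f = f → c * ‖f‖ ^ 2 ≤ qform H₀ f)
    (hV : IsSelfAdjoint V)
    (hV0 : ∀ f, 0 ≤ qform V f)
    (hVM : ∀ f, qform V f ≤ M * ‖f‖ ^ 2)
    (hδ : δ ∈ Set.Ioo (0 : ℝ) 1)
    (hE : E + (δ⁻¹ - 1) * M < c) :
    specCount (qform (H₀ + V)) Set.univ E
      ≤ specCount (qform (H₀ + ((1 - δ : ℝ) : ℂ) • V)) {f : H | P f = f} E := by
  obtain ⟨hδ0, hδ1⟩ := hδ
  refine specCount_le_of_linearMap (P : H →ₗ[ℂ] H)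
    (fun f _ => apply_apply_of_comp_self hPproj f) (qform_zero _) fun f _ _ hf => ?_
  set Qf := (1 - P) f
  have hQQ : (1 - P) Qf = Qf := by
    simp [Qf, apply_apply_of_comp_self hPproj]
  have hQgap : E * ‖Qf‖ ^ 2 ≤ qform (H₀ + ((1 - δ⁻¹ : ℝ) : ℂ) • V) Qf := by
    have hinv : 1 ≤ δ⁻¹ := (one_le_inv₀ hδ0).mpr hδ1.le
    have hc := hgap Qf hQQ
    have hM := mul_le_mul_of_nonpos_left (hVM Qf) (by linarith : 1 - δ⁻¹ ≤ 0)
    rw [qform_add, qform_ofReal_smul]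
    nlinarith [sq_nonneg ‖Qf‖]
  have hsplit := qform_compress_add_qform_compress_le hH₀.isSymmetric hP.isSymmetric hPQ
    hV.isSymmetric hV0 hδ0 f
  rw [norm_sq_eq_norm_apply_sq_add_norm_one_sub_apply_sq hP.isSymmetric hPproj f] at hf
  dsimp only [ContinuousLinearMap.coe_coe]
  linarith
end
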